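/- Let D be an integral domain with quotient field K, n a positive integer, and p ∈ D[X] a monic polynomial of degree n. Let f = g/d ∈ K[X] with g ∈ D[X] and d ∈ D \ {0}. Then f belongs to Int(Mₙᵖ(D), Mₙ(D)) if and only if g lies in the ideal of D[X] generated by d and p, i.e., g is divisible by p modulo dD[X]. -/

import Mathlib

open Polynomial

/-- `IntOn D K S` is the set of polynomials `f ∈ K[X]` that are integer-valued on the set
`S ⊆ Mₙ(D)`: for every `M ∈ S`, evaluating `f` at the image of `M` in `Mₙ(K)` yields a matrix
all of whose entries lie in (the image of) `D`. -/
def IntOn (D K : Type*) [CommRing D] [Field K] [Algebra D K] {n : ℕ}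
    (S : Set (Matrix (Fin n) (Fin n) D)) : Set (Polynomial K) :=
  {f | ∀ M ∈ S, ∀ i j, ∃ d : D,
    algebraMap D K d = (Polynomial.aeval (M.map (algebraMap D K)) f) i j}

/-!
For `M ∈ Mₙ(D)` we have `d · f(M) = g(M)` in `Mₙ(K)`, so `f(M)` has entries in `D` exactly
when every entry of `g(M)` is divisible by `d`. If `g = a d + b p` and `M` has characteristic
polynomial `p`, Cayley–Hamilton gives `g(M) = d · a(M)`. Conversely, take for `M` the matrix of
multiplication by the root on `D[X]/(p)`, whose characteristic polynomial is `p`; then `g(M)` is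
the matrix of multiplication by the class of `g`, and since `x = x · 1`, an element whose
multiplication matrix is divisible by `d` is itself divisible by `d` in `D[X]/(p)`.
-/

open scoped Matrix

section

variable {D K ι : Type*} [CommRing D] [CommRing K] [Algebra D K] [Fintype ι] [DecidableEq ι]

theorem Matrix.map_aeval_algebraMap (M : Matrix ι ι D) (g : D[X]) :
    (aeval M g).map (algebraMap D K) = aeval (M.map (algebraMap D K)) (g.map (algebraMap D K)) := by
  rw [aeval_map_algebraMap]
  exact (aeval_algHom_apply (Algebra.ofId D K).mapMatrix M g).symm

theorem smul_aeval_map_eq_map_aeval {f : K[X]} {g : D[X]} {d : D}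
    (hf : f * C (algebraMap D K d) = g.map (algebraMap D K)) (M : Matrix ι ι D) :
    algebraMap D K d • aeval (M.map (algebraMap D K)) f = (aeval M g).map (algebraMap D K) := by
  rw [Matrix.map_aeval_algebraMap, ← hf, map_mul, aeval_C, ← Algebra.commutes,
    ← Algebra.smul_def]

theorem forall_exists_algebraMap_eq_aeval_iff [IsDomain K] [FaithfulSMul D K] {f : K[X]}
    {g : D[X]} {d : D} (hd : d ≠ 0) (hf : f * C (algebraMap D K d) = g.map (algebraMap D K))
    (M : Matrix ι ι D) :
    (∀ i j, ∃ c : D, algebraMap D K c = aeval (M.map (algebraMap D K)) f i j) ↔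
      ∃ A : Matrix ι ι D, aeval M g = d • A := by
  have hφ := FaithfulSMul.algebraMap_injective D K
  have hentry := fun i j ↦ congr_fun₂ (smul_aeval_map_eq_map_aeval hf M) i j
  simp only [Matrix.smul_apply, Matrix.map_apply, smul_eq_mul] at hentry
  constructor
  · intro h
    choose c hc using h
    refine ⟨Matrix.of c, Matrix.map_injective hφ ?_⟩
    ext i j
    simp [← hentry, ← hc]
  · rintro ⟨A, hA⟩ i j
    refine ⟨A i j, mul_left_cancel₀ ((map_ne_zero_iff _ hφ).2 hd) ?_⟩
    simp [hentry, hA]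

end

theorem Polynomial.exists_aeval_eq_smul_of_mem_span {R A : Type*} [CommRing R] [Ring A]
    [Algebra R A] {p g : R[X]} {d : R} {x : A} (hx : aeval x p = 0)
    (hg : g ∈ Ideal.span {C d, p}) : ∃ y : A, aeval x g = d • y := by
  obtain ⟨a, b, rfl⟩ := Ideal.mem_span_pair.mp hg
  exact ⟨aeval x a, by simp [hx, Algebra.smul_def, Algebra.commutes]⟩

theorem Algebra.exists_eq_smul_of_leftMulMatrix_eq_smul {R S ι : Type*} [CommRing R] [Ring S]
    [Algebra R S] [Fintype ι] [DecidableEq ι] (b : Module.Basis ι R S) {x : S} {r : R}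
    {A : Matrix ι ι R} (h : leftMulMatrix b x = r • A) : ∃ y : S, x = r • y := by
  refine ⟨b.equivFun.symm (A *ᵥ b.equivFun 1), b.equivFun.injective ?_⟩
  rw [map_smul, LinearEquiv.apply_symm_apply, ← Matrix.smul_mulVec, ← h]
  simp [leftMulMatrix_mulVec_repr]

theorem AdjoinRoot.minpoly_root_of_monic {R : Type*} [CommRing R] {p : R[X]} (hp : p.Monic) :
    minpoly R (root p) = p := by
  nontriviality R
  refine (minpoly.unique' R _ hp (by rw [aeval_eq, mk_self]) fun q hq ↦ ?_).symm
  rw [or_iff_not_imp_right, not_not, aeval_eq, mk_eq_zero]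
  intro hdvd
  rw [← (modByMonic_eq_self_iff hp).2 hq, (modByMonic_eq_zero_iff_dvd hp).2 hdvd]

theorem AdjoinRoot.charpoly_leftMulMatrix_root {R : Type*} [CommRing R] {p : R[X]}
    (hp : p.Monic) :
    (Algebra.leftMulMatrix (powerBasis' hp).basis (root p)).charpoly = p :=
  (charpoly_leftMulMatrix (powerBasis' hp)).trans (minpoly_root_of_monic hp)

theorem AdjoinRoot.mem_span_C_pair_of_mk_eq_smul {R : Type*} [CommRing R] {p g : R[X]} {d : R}
    {y : AdjoinRoot p} (hy : mk p g = d • y) : g ∈ Ideal.span {C d, p} := by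
  obtain ⟨h, rfl⟩ := mk_surjective y
  rw [smul_mk, ← sub_eq_zero, ← map_sub, mk_eq_zero, smul_eq_C_mul] at hy
  obtain ⟨q, hq⟩ := hy
  exact Ideal.mem_span_pair.mpr ⟨h, q, by linear_combination -hq⟩

theorem AdjoinRoot.mem_span_C_pair_of_aeval_leftMulMatrix_root_eq_smul {R : Type*} [CommRing R]
    {p g : R[X]} {d : R} (hp : p.Monic)
    {A : Matrix (Fin (powerBasis' hp).dim) (Fin (powerBasis' hp).dim) R}
    (h : aeval (Algebra.leftMulMatrix (powerBasis' hp).basis (root p)) g = d • A) :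
    g ∈ Ideal.span {C d, p} := by
  rw [aeval_algHom_apply, aeval_eq] at h
  obtain ⟨y, hy⟩ := Algebra.exists_eq_smul_of_leftMulMatrix_eq_smul _ h
  exact mem_span_C_pair_of_mk_eq_smul hy

theorem mem_intOn_charpoly_iff_mem_span_general (D K : Type*) [CommRing D] [Field K]
    [Algebra D K] [IsFractionRing D K] (n : ℕ) (p : D[X]) (hp : p.Monic)
    (hdeg : p.natDegree = n) (g : D[X]) (d : D) (hd : d ≠ 0) (f : K[X])
    (hf : f * C (algebraMap D K d) = g.map (algebraMap D K)) :
    f ∈ IntOn D K {M : Matrix (Fin n) (Fin n) D | M.charpoly = p} ↔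
      g ∈ Ideal.span {Polynomial.C d, p} := by
  refine ⟨fun hmem ↦ ?_, fun hg M hM ↦ ?_⟩
  · subst hdeg
    obtain ⟨A, hA⟩ := (forall_exists_algebraMap_eq_aeval_iff hd hf _).mp
      (hmem _ (AdjoinRoot.charpoly_leftMulMatrix_root hp))
    exact AdjoinRoot.mem_span_C_pair_of_aeval_leftMulMatrix_root_eq_smul hp hA
  · refine (forall_exists_algebraMap_eq_aeval_iff hd hf M).mpr ?_
    exact exists_aeval_eq_smul_of_mem_span (hM ▸ M.aeval_self_charpoly) hg

/-- Let `D` be a domain with quotient field `K`, `n` positive, `p ∈ D[X]` monic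
of degree `n`, and `f = g/d ∈ K[X]` with `g ∈ D[X]`, `d ∈ D \ {0}`.  Then
`f ∈ Int(Mₙᵖ(D), Mₙ(D))` iff `g` lies in the ideal of `D[X]` generated by `d` and `p`,
i.e. `g` is divisible by `p` modulo `dD[X]`. -/
theorem mem_intOn_charpoly_iff_mem_span (D K : Type*) [CommRing D] [IsDomain D] [Field K]
    [Algebra D K] [IsFractionRing D K] (n : ℕ) (hn : 0 < n) (p : D[X]) (hp : p.Monic)
    (hdeg : p.natDegree = n) (g : D[X]) (d : D) (hd : d ≠ 0) (f : K[X])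
    (hf : f * C (algebraMap D K d) = g.map (algebraMap D K)) :
    f ∈ IntOn D K {M : Matrix (Fin n) (Fin n) D | M.charpoly = p} ↔
      g ∈ Ideal.span {Polynomial.C d, p} :=
  mem_intOn_charpoly_iff_mem_span_general D K n p hp hdeg g d hd f hf
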